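/- arXiv:2507.22559 — 5 statements merged into one kernel-verified Lean document; each statement's English description precedes it below -/
import Mathlib

section
/- Let T be Hermitian involutory with {T,H}=0, and let |v₀⟩ satisfy T|v₀⟩ = c|v₀⟩ with c ∈ {+1,-1}. Define |v(t)⟩ = exp(-itH)|v₀⟩. Then for all real tₐ, t_b, with h = (t_b - tₐ)/2, one has ⟨v(tₐ)|v(t_b)⟩ = c⟨v(h)|T|v(h)⟩, and this quantity is real. -/
/-!
Write `U t = exp(-itH)`. Then `U s U t = U (s + t)`, `(U t)ᴴ = U (-t)`, and since `T` is an
involution anticommuting with `H`, `T U t = U (-t) T`. Hence `⟨v(tₐ)|v(t_b)⟩ = ⟨v₀|U(t_b - tₐ)|v₀⟩`,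
while `⟨v(h)|T|v(h)⟩ = ⟨v₀|U(-h) T U(h)|v₀⟩ = ⟨v₀|T U(2h)|v₀⟩ = c ⟨v₀|U(2h)|v₀⟩`, and `c² = 1`.
The amplitude `⟨v₀|U τ|v₀⟩` is real because its conjugate is `⟨v₀|U(-τ)|v₀⟩ = ⟨v₀|T U τ T|v₀⟩`,
which is `c²` times itself.
-/

open Matrix Complex

namespace Matrix

variable {m : Type*} [Fintype m]

theorem star_mulVec_dotProduct_mulVec {α : Type*} [NonUnitalSemiring α] [StarRing α]
    (A B C : Matrix m m α) (x y : m → α) :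
    star (A *ᵥ x) ⬝ᵥ B *ᵥ (C *ᵥ y) = star x ⬝ᵥ (Aᴴ * B * C) *ᵥ y := by
  rw [star_mulVec, mulVec_mulVec, dotProduct_mulVec, dotProduct_mulVec, vecMul_vecMul,
    Matrix.mul_assoc]

theorem star_dotProduct_mulVec {α : Type*} [NonUnitalSemiring α] [StarRing α]
    (A : Matrix m m α) (x y : m → α) :
    star (star x ⬝ᵥ A *ᵥ y) = star y ⬝ᵥ Aᴴ *ᵥ x := by
  rw [← star_dotProduct, star_mulVec, dotProduct_mulVec]

theorem dotProduct_mul_mulVec_of_mulVec_eq_smul {T : Matrix m m ℂ} (hT : Tᴴ = T) {x : m → ℂ}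
    {c : ℝ} (hx : T *ᵥ x = (c : ℂ) • x) (M : Matrix m m ℂ) :
    star x ⬝ᵥ (T * M) *ᵥ x = c * (star x ⬝ᵥ M *ᵥ x) := by
  have hxT : star x ᵥ* T = (c : ℂ) • star x := by
    rw [← hT, ← star_mulVec, hx, star_smul, Complex.star_def, conj_ofReal]
  rw [dotProduct_mulVec, ← vecMul_vecMul, hxT, smul_vecMul, smul_dotProduct,
    ← dotProduct_mulVec, smul_eq_mul]

theorem dotProduct_mulVec_mul_of_mulVec_eq_smul {T : Matrix m m ℂ} {x : m → ℂ} {c : ℂ}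
    (hx : T *ᵥ x = c • x) (M : Matrix m m ℂ) :
    star x ⬝ᵥ (M * T) *ᵥ x = c * (star x ⬝ᵥ M *ᵥ x) := by
  rw [← mulVec_mulVec, hx, mulVec_smul, dotProduct_smul, smul_eq_mul]

variable [DecidableEq m]

theorem exp_smul_mul_exp_smul (A : Matrix m m ℂ) (z w : ℂ) :
    NormedSpace.exp (z • A) * NormedSpace.exp (w • A) = NormedSpace.exp ((z + w) • A) := by
  rw [add_smul, exp_add_of_commute _ _ (((Commute.refl A).smul_left z).smul_right w)]

theorem conjTranspose_exp_smul (A : Matrix m m ℂ) (z : ℂ) :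
    (NormedSpace.exp (z • A))ᴴ = NormedSpace.exp (star z • Aᴴ) := by
  rw [← exp_conjTranspose, conjTranspose_smul]

theorem mul_exp_smul_of_anticommute {T A : Matrix m m ℂ} (hT : T * T = 1)
    (hTA : T * A = -(A * T)) (z : ℂ) :
    T * NormedSpace.exp (z • A) = NormedSpace.exp (-z • A) * T := by
  have hconj : T * (z • A) * T = -z • A := by
    rw [Matrix.mul_smul, Matrix.smul_mul, hTA, Matrix.neg_mul, Matrix.mul_assoc, hT,
      Matrix.mul_one, neg_smul, smul_neg]
  have hexp := exp_units_conj ⟨T, T, hT, hT⟩ (z • A)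
  simp only [Units.inv_mk, hconj] at hexp
  calc T * NormedSpace.exp (z • A) = T * NormedSpace.exp (z • A) * T * T := by
        rw [Matrix.mul_assoc _ T T, hT, Matrix.mul_one]
    _ = NormedSpace.exp (-z • A) * T := by rw [hexp]

end Matrix

noncomputable def timeEvolution {m : Type*} [Fintype m] [DecidableEq m]
    (H : Matrix m m ℂ) (t : ℝ) : Matrix m m ℂ :=
  NormedSpace.exp ((-(I * (t : ℂ))) • H)

section timeEvolution

variable {m : Type*} [Fintype m] [DecidableEq m] {H T : Matrix m m ℂ}

theorem timeEvolution_mul_timeEvolution (H : Matrix m m ℂ) (s t : ℝ) :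
    timeEvolution H s * timeEvolution H t = timeEvolution H (s + t) := by
  rw [timeEvolution, timeEvolution, timeEvolution, exp_smul_mul_exp_smul]
  congr 2
  push_cast
  ring

theorem conjTranspose_timeEvolution (hH : H.IsHermitian) (t : ℝ) :
    (timeEvolution H t)ᴴ = timeEvolution H (-t) := by
  rw [timeEvolution, timeEvolution, conjTranspose_exp_smul, hH]
  congr 2
  simp

theorem star_timeEvolution_mulVec_dotProduct (hH : H.IsHermitian) (s t : ℝ) (x y : m → ℂ) :
    star (timeEvolution H s *ᵥ x) ⬝ᵥ timeEvolution H t *ᵥ y =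
      star x ⬝ᵥ timeEvolution H (t - s) *ᵥ y := by
  rw [← one_mulVec (timeEvolution H t *ᵥ y), star_mulVec_dotProduct_mulVec,
    conjTranspose_timeEvolution hH, Matrix.mul_one, timeEvolution_mul_timeEvolution, neg_add_eq_sub]

theorem mul_timeEvolution_of_anticommute (hT2 : T * T = 1) (hanti : T * H = -(H * T))
    (t : ℝ) : T * timeEvolution H t = timeEvolution H (-t) * T := by
  rw [timeEvolution, timeEvolution, mul_exp_smul_of_anticommute hT2 hanti]
  congr 3
  push_cast
  ring

theorem timeEvolution_neg_mul_mul_timeEvolution (hT2 : T * T = 1)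
    (hanti : T * H = -(H * T)) (s : ℝ) :
    timeEvolution H (-s) * T * timeEvolution H s = T * timeEvolution H (2 * s) := by
  rw [← neg_neg s, ← mul_timeEvolution_of_anticommute hT2 hanti, neg_neg, Matrix.mul_assoc,
    timeEvolution_mul_timeEvolution, two_mul]

theorem dotProduct_timeEvolution_neg_mulVec (hT : Tᴴ = T) (hT2 : T * T = 1)
    (hanti : T * H = -(H * T)) {v₀ : m → ℂ} {c : ℝ} (hc : (c : ℂ) * c = 1)
    (hstab : T *ᵥ v₀ = (c : ℂ) • v₀) (t : ℝ) :
    star v₀ ⬝ᵥ timeEvolution H (-t) *ᵥ v₀ = star v₀ ⬝ᵥ timeEvolution H t *ᵥ v₀ := by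
  have hconj : T * timeEvolution H t * T = timeEvolution H (-t) := by
    rw [mul_timeEvolution_of_anticommute hT2 hanti, Matrix.mul_assoc, hT2, Matrix.mul_one]
  rw [← hconj, dotProduct_mulVec_mul_of_mulVec_eq_smul hstab,
    dotProduct_mul_mulVec_of_mulVec_eq_smul hT hstab, ← mul_assoc, hc, one_mul]

end timeEvolution

theorem stmt_1_general (n : ℕ) (H T : Matrix (Fin n) (Fin n) ℂ)
    (hT : Tᴴ = T) (hT2 : T * T = 1) (hH : Hᴴ = H)
    (hanti : T * H = -(H * T))
    (v₀ : Fin n → ℂ)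
    (c : ℝ) (hc : c = 1 ∨ c = -1)
    (hstab : T.mulVec v₀ = (c : ℂ) • v₀)
    (v : ℝ → Fin n → ℂ)
    (hv : ∀ t : ℝ, v t = (NormedSpace.exp ((-(Complex.I * (t : ℂ))) • H)).mulVec v₀)
    (ta tb : ℝ) :
    star (v ta) ⬝ᵥ v tb =
        (c : ℂ) * (star (v ((tb - ta) / 2)) ⬝ᵥ T.mulVec (v ((tb - ta) / 2))) ∧
      (star (v ta) ⬝ᵥ v tb).im = 0 := by
  have hv' : ∀ t, v t = timeEvolution H t *ᵥ v₀ := hv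
  have hc2 : (c : ℂ) * c = 1 := by rcases hc with rfl | rfl <;> norm_num
  have hoverlap : star (v ta) ⬝ᵥ v tb = star v₀ ⬝ᵥ timeEvolution H (tb - ta) *ᵥ v₀ := by
    rw [hv', hv', star_timeEvolution_mulVec_dotProduct hH]
  have hexpect : star (v ((tb - ta) / 2)) ⬝ᵥ T *ᵥ v ((tb - ta) / 2) =
      c * (star v₀ ⬝ᵥ timeEvolution H (tb - ta) *ᵥ v₀) := by
    rw [hv', star_mulVec_dotProduct_mulVec, conjTranspose_timeEvolution hH,
      timeEvolution_neg_mul_mul_timeEvolution hT2 hanti, mul_div_cancel₀ _ two_ne_zero,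
      dotProduct_mul_mulVec_of_mulVec_eq_smul hT hstab]
  refine ⟨by rw [hoverlap, hexpect, ← mul_assoc, hc2, one_mul], ?_⟩
  rw [← conj_eq_iff_im, hoverlap, ← Complex.star_def, star_dotProduct_mulVec,
    conjTranspose_timeEvolution hH, dotProduct_timeEvolution_neg_mulVec hT hT2 hanti hc2 hstab]

/-- With `T` Hermitian involutory, `{T,H}=0`, `T|v₀⟩ = c|v₀⟩` (`c = ±1`),
`|v(t)⟩ = exp(-itH)|v₀⟩`: for all `tₐ, t_b`, with `h = (t_b - tₐ)/2`,
`⟨v(tₐ)|v(t_b)⟩ = c⟨v(h)|T|v(h)⟩` and this quantity is real. -/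
theorem stmt_1 (n : ℕ) (H T : Matrix (Fin n) (Fin n) ℂ)
    (hT : Tᴴ = T) (hT2 : T * T = 1) (hH : Hᴴ = H)
    (hanti : T * H = -(H * T))
    (v₀ : Fin n → ℂ) (hv₀ : star v₀ ⬝ᵥ v₀ = 1)
    (c : ℝ) (hc : c = 1 ∨ c = -1)
    (hstab : T.mulVec v₀ = (c : ℂ) • v₀)
    (v : ℝ → Fin n → ℂ)
    (hv : ∀ t : ℝ, v t = (NormedSpace.exp ((-(Complex.I * (t : ℂ))) • H)).mulVec v₀)
    (ta tb : ℝ) :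
    star (v ta) ⬝ᵥ v tb =
        (c : ℂ) * (star (v ((tb - ta) / 2)) ⬝ᵥ T.mulVec (v ((tb - ta) / 2))) ∧
      (star (v ta) ⬝ᵥ v tb).im = 0 :=
  stmt_1_general n H T hT hT2 hH hanti v₀ c hc hstab v hv ta tb
end

section
/- With P = (T+I)/2, P⊥ = (I-T)/2 and U = exp(-itH), the sum PUP + P⊥UP⊥ equals the Hermitian part (U+U†)/2 of U. -/
/-!
Since `T` anticommutes with the skew-Hermitian generator `A = -itH`, conjugation by the
involution `T` sends `U = exp A` to `exp (-A) = U†`. Expanding the projections,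
`PUP + P⊥UP⊥ = (U + TUT)/2` holds for any `T`, and `TUT = U†` finishes the proof.
-/

open Matrix NormedSpace

theorem NormedSpace.exp_conj_of_mul_self_eq_one_of_anticommute {𝔸 : Type*} [NormedRing 𝔸]
    [NormedAlgebra ℚ 𝔸] [CompleteSpace 𝔸] {t a : 𝔸} (ht : t * t = 1) (hta : t * a = -(a * t)) :
    t * exp a * t = exp (-a) := by
  have hconj := exp_units_conj ⟨t, t, ht, ht⟩ a
  simp only [Units.inv_mk] at hconj
  rw [← hconj, hta, neg_mul, mul_assoc, ht, mul_one]

theorem NormedSpace.star_exp_of_mem_skewAdjoint {𝔸 : Type*} [Ring 𝔸] [TopologicalSpace 𝔸]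
    [IsTopologicalRing 𝔸] [T2Space 𝔸] [StarRing 𝔸] [ContinuousStar 𝔸] {a : 𝔸}
    (ha : a ∈ skewAdjoint 𝔸) : star (exp a) = exp (-a) := by
  rw [star_exp, skewAdjoint.mem_iff.mp ha]

theorem Complex.neg_I_mul_ofReal_mem_skewAdjoint (t : ℝ) :
    -(Complex.I * t) ∈ skewAdjoint ℂ := by
  simp [skewAdjoint.mem_iff]

theorem inv_two_smul_add_one_sandwich_add_inv_two_smul_one_sub_sandwich {𝕜 𝔸 : Type*} [Field 𝕜]
    [NeZero (2 : 𝕜)] [Ring 𝔸] [Algebra 𝕜 𝔸] (t u : 𝔸) :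
    (2⁻¹ : 𝕜) • (t + 1) * u * (2⁻¹ : 𝕜) • (t + 1) + (2⁻¹ : 𝕜) • (1 - t) * u * (2⁻¹ : 𝕜) • (1 - t)
      = (2⁻¹ : 𝕜) • (u + t * u * t) := by
  simp only [smul_mul_assoc, mul_smul_comm, add_mul, mul_add, sub_mul, mul_sub,
    mul_one, one_mul, smul_add, smul_sub, smul_smul]
  match_scalars <;> field_simp <;> ring

theorem stmt_9_general (n : ℕ) (H T : Matrix (Fin n) (Fin n) ℂ)
    (hT2 : T * T = 1) (hH : Hᴴ = H)
    (hanti : T * H = -(H * T))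
    (P Pperp : Matrix (Fin n) (Fin n) ℂ)
    (hP : P = (2⁻¹ : ℂ) • (T + 1)) (hPperp : Pperp = (2⁻¹ : ℂ) • (1 - T))
    (t : ℝ) (U : Matrix (Fin n) (Fin n) ℂ)
    (hU : U = NormedSpace.exp ((-(Complex.I * (t : ℂ))) • H)) :
    P * U * P + Pperp * U * Pperp = (2⁻¹ : ℂ) • (U + Uᴴ) := by
  set A := (-(Complex.I * (t : ℂ))) • H
  have hA : A ∈ skewAdjoint _ :=
    IsSelfAdjoint.smul_mem_skewAdjoint (Complex.neg_I_mul_ofReal_mem_skewAdjoint t) hH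
  have hTA : T * A = -(A * T) := by rw [mul_smul_comm, smul_mul_assoc, hanti, smul_neg]
  have hU_conjTranspose : Uᴴ = T * U * T := by
    rw [hU, ← star_eq_conjTranspose, star_exp_of_mem_skewAdjoint hA]
    -- any Banach-algebra norm on matrices will do, as `exp` only depends on the topology
    open scoped Norms.Operator in
    exact (exp_conj_of_mul_self_eq_one_of_anticommute hT2 hTA).symm
  rw [hP, hPperp, hU_conjTranspose]
  exact inv_two_smul_add_one_sandwich_add_inv_two_smul_one_sub_sandwich T U

/-- With `P = (T+I)/2`, `P⊥ = (I-T)/2`, `U = exp(-itH)`: `PUP + P⊥UP⊥ = (U+U†)/2`. -/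
theorem stmt_9 (n : ℕ) (H T : Matrix (Fin n) (Fin n) ℂ)
    (hT : Tᴴ = T) (hT2 : T * T = 1) (hH : Hᴴ = H)
    (hanti : T * H = -(H * T))
    (P Pperp : Matrix (Fin n) (Fin n) ℂ)
    (hP : P = (2⁻¹ : ℂ) • (T + 1)) (hPperp : Pperp = (2⁻¹ : ℂ) • (1 - T))
    (t : ℝ) (U : Matrix (Fin n) (Fin n) ℂ)
    (hU : U = NormedSpace.exp ((-(Complex.I * (t : ℂ))) • H)) :
    P * U * P + Pperp * U * Pperp = (2⁻¹ : ℂ) • (U + Uᴴ) :=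
  stmt_9_general n H T hT2 hH hanti P Pperp hP hPperp t U hU
end

section
/- Under the same hypotheses, with h = (t_b-tₐ)/2 and U = exp(-i(t_b-tₐ)H): (i/ξ²)⟨v(h)|(iHT)|v(h)⟩ - i(1-1/ξ²)⟨v⊥(h)|(iHT)|v⊥(h)⟩ = i·Im⟨φ|UH|φ⟩. -/
open Matrix

/-!
Write `E = exp(-ihH)`, so that `U = E²`. Conjugating by the involution `T` flips the sign of `H`,
hence `T E = E† T`, and then `Y := E† (HT) E` has anticommutator `T Y + Y T = (E H E)† - E H E`
with `E H E = U H`. The prefactors `1/ξ²` and `1 - 1/ξ²` are `‖Pφ‖²` and `‖P⊥φ‖²`, so they cancel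
the normalizations of `v` and `v⊥`, and the left side becomes `i⟨φ|(P Y' P - P⊥ Y' P⊥)|φ⟩` with
`Y' = iY`. For `P = (1 + T)/2` this sandwich difference is half the anticommutator, which gives
`(i/2)·i·⟨φ|(UH)† - UH|φ⟩ = i Im⟨φ|UH|φ⟩`.
-/

section StarRing

variable {R : Type*} [Ring R] [StarRing R]

theorem anticommutator_star_mul_mul {T H E : R} (hH : star H = H) (hT2 : T * T = 1)
    (hanti : T * H = -(H * T)) (hTE : T * E = star E * T) :
    T * (star E * (H * T) * E) + star E * (H * T) * E * T = star (E * H * E) - E * H * E := by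
  have hTHT : T * H * T = -H := by rw [hanti, neg_mul, mul_assoc, hT2, mul_one]
  have hTE' : T * star E = E * T :=
    calc T * star E = T * (star E * T * T) := by rw [mul_assoc, hT2, mul_one]
      _ = T * T * E * T := by rw [← hTE]; simp only [mul_assoc]
      _ = E * T := by rw [hT2, one_mul]
  have hleft : T * (star E * (H * T) * E) = -(E * H * E) :=
    calc T * (star E * (H * T) * E) = T * star E * H * T * E := by simp only [mul_assoc]
      _ = E * (T * H * T) * E := by rw [hTE']; simp only [mul_assoc]
      _ = -(E * H * E) := by rw [hTHT, mul_neg, neg_mul]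
  have hright : star E * (H * T) * E * T = star (E * H * E) :=
    calc star E * (H * T) * E * T = star E * H * (T * E * T) := by simp only [mul_assoc]
      _ = star (E * H * E) := by
        rw [hTE, mul_assoc _ T T, hT2, mul_one, star_mul, star_mul, hH, mul_assoc]
  rw [hleft, hright, sub_eq_add_neg, add_comm]

end StarRing

section Algebra

variable {A : Type*} [Ring A] [Algebra ℂ A]

theorem half_smul_add_one_mul_self {T : A} (hT2 : T * T = 1) :
    (2⁻¹ : ℂ) • (T + 1) * (2⁻¹ : ℂ) • (T + 1) = (2⁻¹ : ℂ) • (T + 1) := by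
  simp only [smul_mul_assoc, mul_smul_comm, add_mul, mul_add, hT2, one_mul, mul_one]
  module

theorem sandwich_sub_sandwich_eq_anticommutator {T P Y : A} (hP : P = (2⁻¹ : ℂ) • (T + 1)) :
    P * Y * P - (1 - P) * Y * (1 - P) = (2⁻¹ : ℂ) • (T * Y + Y * T) := by
  subst hP
  simp only [sub_mul, mul_sub, smul_mul_assoc, mul_smul_comm, add_mul, mul_add, one_mul,
    mul_one]
  module

end Algebra

theorem sq_div_sqrt_sq_sub_one {ξ : ℝ} (hξ : ξ ≠ 0) (h : 0 ≤ 1 - 1 / ξ ^ 2) :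
    (ξ / √(ξ ^ 2 - 1)) ^ 2 = (1 - 1 / ξ ^ 2)⁻¹ := by
  have hξ1 : 1 ≤ ξ ^ 2 := by rwa [sub_nonneg, div_le_one (by positivity)] at h
  rw [div_pow, Real.sq_sqrt (by linarith)]
  field_simp

namespace Matrix

variable {ι : Type*}

theorem conjTranspose_half_smul_add_one [DecidableEq ι] {T : Matrix ι ι ℂ} (hT : Tᴴ = T) :
    ((2⁻¹ : ℂ) • (T + 1))ᴴ = (2⁻¹ : ℂ) • (T + 1) := by
  rw [conjTranspose_smul, conjTranspose_add, hT, conjTranspose_one]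
  norm_num

variable [Fintype ι]

theorem star_mulVec_dotProduct_mulVec_s12 (M A : Matrix ι ι ℂ) (x : ι → ℂ) :
    star (M *ᵥ x) ⬝ᵥ A *ᵥ (M *ᵥ x) = star x ⬝ᵥ (Mᴴ * A * M) *ᵥ x := by
  rw [star_mulVec, ← dotProduct_mulVec]
  simp only [mulVec_mulVec, Matrix.mul_assoc]

theorem star_dotProduct_conjTranspose_mulVec (M : Matrix ι ι ℂ) (x : ι → ℂ) :
    star x ⬝ᵥ Mᴴ *ᵥ x = star (star x ⬝ᵥ M *ᵥ x) := by
  rw [star_dotProduct, star_mulVec, ← dotProduct_mulVec, conjTranspose_conjTranspose]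

theorem star_mulVec_dotProduct_mulVec_self {Q : Matrix ι ι ℂ} (hQ : Qᴴ = Q) (hQQ : Q * Q = Q)
    (x : ι → ℂ) : star (Q *ᵥ x) ⬝ᵥ Q *ᵥ x = star x ⬝ᵥ Q *ᵥ x := by
  rw [star_mulVec, ← dotProduct_mulVec, mulVec_mulVec, hQ, hQQ]

open ComplexOrder in
theorem nonneg_of_star_dotProduct_mulVec_eq {Q : Matrix ι ι ℂ} (hQ : Qᴴ = Q) (hQQ : Q * Q = Q)
    {x : ι → ℂ} {s : ℝ} (hs : star x ⬝ᵥ Q *ᵥ x = s) : 0 ≤ s :=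
  Complex.zero_le_real.mp <|
    hs ▸ star_mulVec_dotProduct_mulVec_self hQ hQQ x ▸ dotProduct_star_self_nonneg _

open ComplexOrder in
theorem ofReal_mul_dotProduct_smul {w : ι → ℂ} {s c : ℝ} (hs : star w ⬝ᵥ w = s)
    (hc : c ^ 2 = s⁻¹) (A : Matrix ι ι ℂ) :
    (s : ℂ) * (star ((c : ℂ) • w) ⬝ᵥ A *ᵥ ((c : ℂ) • w)) = star w ⬝ᵥ A *ᵥ w := by
  rcases eq_or_ne s 0 with rfl | hs0
  · obtain rfl : w = 0 := dotProduct_star_self_eq_zero.mp (by simpa using hs)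
    simp
  · have hsc : (s : ℂ) * (c * c) = 1 := by
      rw [← sq]; exact_mod_cast (by rw [hc, mul_inv_cancel₀ hs0] : s * c ^ 2 = 1)
    rw [mulVec_smul, star_smul, smul_dotProduct, dotProduct_smul, Complex.star_def,
      Complex.conj_ofReal, smul_eq_mul, smul_eq_mul]
    linear_combination (star w ⬝ᵥ A *ᵥ w) * hsc

theorem ofReal_mul_expectation_smul_mulVec_mulVec {Q : Matrix ι ι ℂ} (hQ : Qᴴ = Q)
    (hQQ : Q * Q = Q) {φ : ι → ℂ} {s c : ℝ} (hs : star φ ⬝ᵥ Q *ᵥ φ = s) (hc : c ^ 2 = s⁻¹)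
    (E A : Matrix ι ι ℂ) :
    (s : ℂ) * (star ((c : ℂ) • E *ᵥ Q *ᵥ φ) ⬝ᵥ A *ᵥ ((c : ℂ) • E *ᵥ Q *ᵥ φ)) =
      star φ ⬝ᵥ (Q * (Eᴴ * A * E) * Q) *ᵥ φ := by
  rw [← mulVec_smul, star_mulVec_dotProduct_mulVec_s12,
    ofReal_mul_dotProduct_smul ((star_mulVec_dotProduct_mulVec_self hQ hQQ φ).trans hs) hc,
    star_mulVec_dotProduct_mulVec_s12, hQ]

variable [DecidableEq ι]

theorem I_mul_expectation_half_anticommutator {T H E : Matrix ι ι ℂ} (hH : Hᴴ = H)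
    (hT2 : T * T = 1) (hanti : T * H = -(H * T)) (hTE : T * E = Eᴴ * T) (φ : ι → ℂ) :
    Complex.I * (star φ ⬝ᵥ ((2⁻¹ : ℂ) • (T * (Eᴴ * (Complex.I • (H * T)) * E) +
        Eᴴ * (Complex.I • (H * T)) * E * T)) *ᵥ φ) =
      Complex.I * (star φ ⬝ᵥ (E * H * E) *ᵥ φ).im := by
  have hanticomm := anticommutator_star_mul_mul (R := Matrix ι ι ℂ) hH hT2 hanti hTE
  rw [star_eq_conjTranspose, star_eq_conjTranspose] at hanticomm
  rw [Matrix.mul_smul, Matrix.smul_mul, Matrix.mul_smul, Matrix.smul_mul, ← smul_add, hanticomm,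
    smul_smul, smul_mulVec, dotProduct_smul, sub_mulVec, dotProduct_sub,
    star_dotProduct_conjTranspose_mulVec, smul_eq_mul, Complex.star_def]
  set z := star φ ⬝ᵥ (E * H * E) *ᵥ φ
  have hsub := Complex.sub_conj z
  push_cast at hsub
  linear_combination (2⁻¹ : ℂ) * hsub + 2⁻¹ * (starRingEnd ℂ z - z) * Complex.I_sq

theorem mul_exp_smul_of_anticommute_s12 {T H : Matrix ι ι ℂ} (hT2 : T * T = 1)
    (hanti : T * H = -(H * T)) (c : ℂ) :
    T * NormedSpace.exp (c • H) = NormedSpace.exp (-c • H) * T := by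
  have hTinv : T⁻¹ = T := inv_eq_right_inv hT2
  have hconj : -c • H = T * (c • H) * T⁻¹ := by
    rw [hTinv, Matrix.mul_smul, Matrix.smul_mul, hanti, Matrix.neg_mul, Matrix.mul_assoc, hT2,
      mul_one, smul_neg, neg_smul]
  rw [hconj, exp_conj T _ ⟨⟨T, T, hT2, hT2⟩, rfl⟩, hTinv, Matrix.mul_assoc _ T T, hT2, mul_one]

theorem mul_exp_neg_I_smul_eq_conjTranspose_mul {T H : Matrix ι ι ℂ} (hH : Hᴴ = H)
    (hT2 : T * T = 1) (hanti : T * H = -(H * T)) (t : ℝ) :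
    T * NormedSpace.exp (-(Complex.I * t) • H) =
      (NormedSpace.exp (-(Complex.I * t) • H))ᴴ * T := by
  rw [mul_exp_smul_of_anticommute_s12 hT2 hanti, ← exp_conjTranspose, conjTranspose_smul, hH]
  simp [Complex.conj_ofReal]

theorem exp_two_mul_smul_mul_self (c : ℂ) (H : Matrix ι ι ℂ) :
    NormedSpace.exp ((2 * c) • H) * H = NormedSpace.exp (c • H) * H * NormedSpace.exp (c • H) := by
  rw [two_mul, add_smul, exp_add_of_commute _ _ (Commute.refl _), Matrix.mul_assoc,
    Matrix.mul_assoc, ((Commute.refl H).smul_left c).exp_left.eq]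

end Matrix

theorem stmt_12_general (n : ℕ) (H T : Matrix (Fin n) (Fin n) ℂ)
    (hT : Tᴴ = T) (hT2 : T * T = 1) (hH : Hᴴ = H)
    (hanti : T * H = -(H * T))
    (P Pperp : Matrix (Fin n) (Fin n) ℂ)
    (hP : P = (2⁻¹ : ℂ) • (T + 1)) (hPperp : Pperp = 1 - P)
    (φ : Fin n → ℂ) (hφ : star φ ⬝ᵥ φ = 1)
    (ξ : ℝ) (hξ : ξ > 0) (hξdef : ((1 / ξ ^ 2 : ℝ) : ℂ) = star φ ⬝ᵥ P.mulVec φ)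
    (v vperp : ℝ → Fin n → ℂ)
    (hv : ∀ t : ℝ, v t =
      (ξ : ℂ) • (NormedSpace.exp ((-(Complex.I * (t : ℂ))) • H)).mulVec (P.mulVec φ))
    (hvperp : ∀ t : ℝ, vperp t =
      ((ξ / Real.sqrt (ξ ^ 2 - 1) : ℝ) : ℂ) •
        (NormedSpace.exp ((-(Complex.I * (t : ℂ))) • H)).mulVec (Pperp.mulVec φ))
    (ta tb : ℝ) (h : ℝ) (hh : h = (tb - ta) / 2)
    (U : Matrix (Fin n) (Fin n) ℂ)
    (hU : U = NormedSpace.exp ((-(Complex.I * ((tb - ta : ℝ) : ℂ))) • H)) :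
    Complex.I * ((1 / ξ ^ 2 : ℝ) : ℂ) *
          (star (v h) ⬝ᵥ (Complex.I • (H * T)).mulVec (v h)) -
        Complex.I * ((1 - 1 / ξ ^ 2 : ℝ) : ℂ) *
          (star (vperp h) ⬝ᵥ (Complex.I • (H * T)).mulVec (vperp h)) =
      Complex.I * ((star φ ⬝ᵥ (U * H).mulVec φ).im : ℂ) := by
  have hPperp' : Pperp = (2⁻¹ : ℂ) • (-T + 1) := by rw [hPperp, hP]; module
  have hPherm : Pᴴ = P := hP ▸ conjTranspose_half_smul_add_one hT
  have hPidem : P * P = P := hP ▸ half_smul_add_one_mul_self hT2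
  have hPperpherm : Pperpᴴ = Pperp :=
    hPperp' ▸ conjTranspose_half_smul_add_one (by rw [conjTranspose_neg, hT])
  have hPperpidem : Pperp * Pperp = Pperp :=
    hPperp' ▸ half_smul_add_one_mul_self (by rw [neg_mul_neg, hT2])
  have hsPperp : star φ ⬝ᵥ Pperp *ᵥ φ = ((1 - 1 / ξ ^ 2 : ℝ) : ℂ) := by
    rw [hPperp, sub_mulVec, one_mulVec, dotProduct_sub, hφ, ← hξdef]; push_cast; ring
  have hcP : ξ ^ 2 = (1 / ξ ^ 2)⁻¹ := by rw [one_div, inv_inv]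
  have hcPperp := sq_div_sqrt_sq_sub_one hξ.ne'
    (nonneg_of_star_dotProduct_mulVec_eq hPperpherm hPperpidem hsPperp)
  have hUH : U * H = NormedSpace.exp (-(Complex.I * (h : ℂ)) • H) * H *
      NormedSpace.exp (-(Complex.I * (h : ℂ)) • H) := by
    rw [hU, ← exp_two_mul_smul_mul_self, hh]; push_cast; ring_nf
  rw [hv, hvperp, mul_assoc, mul_assoc,
    ofReal_mul_expectation_smul_mulVec_mulVec hPherm hPidem hξdef.symm hcP,
    ofReal_mul_expectation_smul_mulVec_mulVec hPperpherm hPperpidem hsPperp hcPperp,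
    ← mul_sub, ← dotProduct_sub, ← sub_mulVec, hPperp, sandwich_sub_sandwich_eq_anticommutator hP,
    I_mul_expectation_half_anticommutator hH hT2 hanti
      (mul_exp_neg_I_smul_eq_conjTranspose_mul hH hT2 hanti h), hUH]

/-- Implicit Hadamard test (imaginary part): with `T` Hermitian involutory, `{T,H}=0`,
`P = (T+I)/2`, `P⊥ = I - P`, `|φ⟩` a unit vector with nonzero projections,
`1/ξ² = ⟨φ|P|φ⟩`, `|v(t)⟩ = ξ exp(-itH)P|φ⟩`, `|v⊥(t)⟩ = (ξ/√(ξ²-1)) exp(-itH)P⊥|φ⟩`: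
for `h = (t_b-tₐ)/2` and `U = exp(-i(t_b-tₐ)H)`,
`(i/ξ²)⟨v(h)|(iHT)|v(h)⟩ - i(1-1/ξ²)⟨v⊥(h)|(iHT)|v⊥(h)⟩ = i·Im⟨φ|UH|φ⟩`. -/
theorem stmt_12 (n : ℕ) (H T : Matrix (Fin n) (Fin n) ℂ)
    (hT : Tᴴ = T) (hT2 : T * T = 1) (hH : Hᴴ = H)
    (hanti : T * H = -(H * T))
    (P Pperp : Matrix (Fin n) (Fin n) ℂ)
    (hP : P = (2⁻¹ : ℂ) • (T + 1)) (hPperp : Pperp = 1 - P)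
    (φ : Fin n → ℂ) (hφ : star φ ⬝ᵥ φ = 1)
    (hproj : P.mulVec φ ≠ 0) (hprojp : Pperp.mulVec φ ≠ 0)
    (ξ : ℝ) (hξ : ξ > 0) (hξdef : ((1 / ξ ^ 2 : ℝ) : ℂ) = star φ ⬝ᵥ P.mulVec φ)
    (v vperp : ℝ → Fin n → ℂ)
    (hv : ∀ t : ℝ, v t =
      (ξ : ℂ) • (NormedSpace.exp ((-(Complex.I * (t : ℂ))) • H)).mulVec (P.mulVec φ))
    (hvperp : ∀ t : ℝ, vperp t =
      ((ξ / Real.sqrt (ξ ^ 2 - 1) : ℝ) : ℂ) •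
        (NormedSpace.exp ((-(Complex.I * (t : ℂ))) • H)).mulVec (Pperp.mulVec φ))
    (ta tb : ℝ) (h : ℝ) (hh : h = (tb - ta) / 2)
    (U : Matrix (Fin n) (Fin n) ℂ)
    (hU : U = NormedSpace.exp ((-(Complex.I * ((tb - ta : ℝ) : ℂ))) • H)) :
    Complex.I * ((1 / ξ ^ 2 : ℝ) : ℂ) *
          (star (v h) ⬝ᵥ (Complex.I • (H * T)).mulVec (v h)) -
        Complex.I * ((1 - 1 / ξ ^ 2 : ℝ) : ℂ) *
          (star (vperp h) ⬝ᵥ (Complex.I • (H * T)).mulVec (vperp h)) =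
      Complex.I * ((star φ ⬝ᵥ (U * H).mulVec φ).im : ℂ) :=
  stmt_12_general n H T hT hT2 hH hanti P Pperp hP hPperp φ hφ ξ hξ hξdef v vperp hv hvperp ta tb h
    hh U hU
end

section
/- Localized implicit Hadamard test: with T = ⊗T_j Hermitian involutory, {T,H}=0, P_α the localized projectors with parity p(α) = (-1)^{Σα(j)}, U = exp(-i(t_b-tₐ)H), √U = exp(-i((t_b-tₐ)/2)H), and any state |φ⟩: Σ_α p(α)⟨φ|P_α (√U)† T (√U) P_α|φ⟩ = Re ⟨φ| Σ_α P_α U P_α |φ⟩. -/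
/-
Since `T` is an involution anticommuting with `H`, `T e^{cH} = e^{-cH} T`; for purely imaginary
`c` this gives `T √U = (√U)† T`, hence `(√U)† T √U = T U`. The projector `P_α` absorbs `T` as the
sign `p(α)`, so the `α`-term on the left is `p(α)² ⟨φ|P_α U P_α|φ⟩ = ⟨φ|P_α U P_α|φ⟩`. Finally
`U† = T U T`, and absorbing both copies of `T` into `P_α` shows that `P_α U P_α` is Hermitian,
so the quadratic form of `Σ_α P_α U P_α` is real.
-/

open Matrix

/-- The tensor (Kronecker) product of a family of square matrices, realized as a matrix
indexed by the product of the index types. -/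
def tensorProd {s : ℕ} {n : Fin s → ℕ}
    (M : ∀ j, Matrix (Fin (n j)) (Fin (n j)) ℂ) :
    Matrix (∀ j, Fin (n j)) (∀ j, Fin (n j)) ℂ :=
  fun x y => ∏ j, M j (x j) (y j)

/-- The localized projector `P_α = ⊗_j (I + (-1)^{α(j)} T_j)/2`. -/
noncomputable def locProj {s : ℕ} {n : Fin s → ℕ}
    (T : ∀ j, Matrix (Fin (n j)) (Fin (n j)) ℂ) (α : Fin s → Fin 2) :
    Matrix (∀ j, Fin (n j)) (∀ j, Fin (n j)) ℂ :=
  tensorProd fun j => (2⁻¹ : ℂ) • (1 + ((-1 : ℂ) ^ (α j : ℕ)) • T j)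

open NormedSpace

theorem neg_one_pow_mul_self (k : ℕ) : (-1 : ℂ) ^ k * (-1) ^ k = 1 := by
  rw [← mul_pow, neg_one_mul, neg_neg, one_pow]

theorem one_add_smul_mul_self {R : Type*} [Ring R] [Algebra ℂ R] {t : R} (ht : t * t = 1)
    {ε : ℂ} (hε : ε * ε = 1) : (1 + ε • t) * t = ε • (1 + ε • t) := by
  rw [add_mul, one_mul, smul_mul_assoc, ht, smul_add, smul_smul, hε, one_smul, add_comm]

namespace Matrix

variable {ι : Type*} [Fintype ι]

theorem IsHermitian.ofReal_re_star_dotProduct_mulVec_self {M : Matrix ι ι ℂ}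
    (hM : M.IsHermitian) (x : ι → ℂ) :
    (((star x ⬝ᵥ M *ᵥ x).re : ℝ) : ℂ) = star x ⬝ᵥ M *ᵥ x := by
  refine Complex.ext rfl ?_
  simpa using (hM.im_star_dotProduct_mulVec_self x).symm

variable [DecidableEq ι]

theorem mul_exp_eq_exp_neg_mul {A X : Matrix ι ι ℂ} (hA : A * A = 1) (hAX : A * X = -(X * A)) :
    A * exp X = exp (-X) * A := by
  have hconj := exp_conj A X ⟨⟨A, A, hA, hA⟩, rfl⟩
  rw [inv_eq_right_inv hA, hAX, neg_mul, mul_assoc, hA, mul_one] at hconj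
  rw [hconj, mul_assoc, hA, mul_one]

theorem conjTranspose_exp_smul_s17 {H : Matrix ι ι ℂ} (hH : H.IsHermitian) {c : ℂ}
    (hc : star c = -c) : (exp (c • H))ᴴ = exp ((-c) • H) := by
  rw [← exp_conjTranspose, conjTranspose_smul, hH, hc]

-- `A`, `V`, `P`, `p` play the roles of `T`, `√U`, `P_α`, `p(α)`.
variable {A V P : Matrix ι ι ℂ} {p : ℂ}

theorem mul_conjTranspose_mul_mul_mul_eq_smul (hPA : P * A = p • P) (hAV : A * V = Vᴴ * A) :
    P * Vᴴ * A * V * P = p • (P * (V * V) * P) := by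
  rw [mul_assoc P, ← hAV, ← mul_assoc, hPA]
  simp only [smul_mul_assoc, mul_assoc]

theorem isHermitian_mul_mul_self_mul (hA : A * A = 1) (hAV : A * V = Vᴴ * A)
    (hP : P.IsHermitian) (hPA : P * A = p • P) (hAP : A * P = p • P) (hp : p * p = 1) :
    (P * (V * V) * P).IsHermitian := by
  have hVV : Vᴴ * Vᴴ = A * (V * V) * A := by
    rw [← mul_assoc, hAV, mul_assoc Vᴴ, hAV, mul_assoc, mul_assoc, hA, mul_one]
  calc (P * (V * V) * P)ᴴ = P * A * (V * V) * (A * P) := by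
        rw [conjTranspose_mul, conjTranspose_mul, conjTranspose_mul, hP.eq, hVV]
        simp only [mul_assoc]
    _ = P * (V * V) * P := by
        rw [hPA, hAP, smul_mul_assoc, smul_mul_assoc, mul_smul_comm, smul_smul, hp, one_smul]

end Matrix

section TensorProduct
variable {s : ℕ} {n : Fin s → ℕ}

theorem tensorProd_mul (M N : ∀ j, Matrix (Fin (n j)) (Fin (n j)) ℂ) :
    tensorProd M * tensorProd N = tensorProd fun j => M j * N j := by
  ext x y
  simp only [tensorProd, mul_apply, ← Finset.prod_mul_distrib]
  rw [Finset.prod_univ_sum, Fintype.piFinset_univ]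

theorem tensorProd_smul (c : Fin s → ℂ) (M : ∀ j, Matrix (Fin (n j)) (Fin (n j)) ℂ) :
    (tensorProd fun j => c j • M j) = (∏ j, c j) • tensorProd M := by
  ext x y
  simp [tensorProd, Finset.prod_mul_distrib]

theorem tensorProd_one : tensorProd (fun j => (1 : Matrix (Fin (n j)) (Fin (n j)) ℂ)) = 1 := by
  ext x y
  simp only [tensorProd, one_apply, Finset.prod_boole, Finset.mem_univ, forall_true_left]
  simp [funext_iff]

theorem conjTranspose_tensorProd (M : ∀ j, Matrix (Fin (n j)) (Fin (n j)) ℂ) :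
    (tensorProd M)ᴴ = tensorProd fun j => (M j)ᴴ := by
  ext x y
  simp [tensorProd, star_prod]

theorem commute_tensorProd {M N : ∀ j, Matrix (Fin (n j)) (Fin (n j)) ℂ}
    (h : ∀ j, Commute (M j) (N j)) : Commute (tensorProd M) (tensorProd N) := by
  simp only [Commute, SemiconjBy, tensorProd_mul, (h _).eq]

end TensorProduct

section LocalizedProjector
variable {s : ℕ} {n : Fin s → ℕ} {T : ∀ j, Matrix (Fin (n j)) (Fin (n j)) ℂ}

theorem tensorProd_mul_self (hT2 : ∀ j, T j * T j = 1) : tensorProd T * tensorProd T = 1 := by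
  simp only [tensorProd_mul, hT2, tensorProd_one]

theorem locProj_mul_tensorProd (hT2 : ∀ j, T j * T j = 1) (α : Fin s → Fin 2) :
    locProj T α * tensorProd T = (-1 : ℂ) ^ (∑ j, (α j : ℕ)) • locProj T α := by
  simp only [locProj, tensorProd_mul, smul_mul_assoc,
    one_add_smul_mul_self (hT2 _) (neg_one_pow_mul_self _), smul_comm (2⁻¹ : ℂ)]
  rw [tensorProd_smul, Finset.prod_pow_eq_pow_sum]

theorem commute_tensorProd_locProj (α : Fin s → Fin 2) :
    Commute (tensorProd T) (locProj T α) :=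
  commute_tensorProd fun _ =>
    ((Commute.one_right _).add_right ((Commute.refl _).smul_right _)).smul_right _

theorem isHermitian_locProj (hT : ∀ j, (T j)ᴴ = T j) (α : Fin s → Fin 2) :
    (locProj T α).IsHermitian := by
  simp [IsHermitian, locProj, conjTranspose_tensorProd, hT]

end LocalizedProjector

/-- Localized implicit Hadamard test: with `T = ⊗T_j` Hermitian involutory, `{T,H}=0`,
`P_α` the localized projectors with parity `p(α) = (-1)^{Σα(j)}`, `U = exp(-i(t_b-tₐ)H)`,
`√U = exp(-i((t_b-tₐ)/2)H)`, and any state `|φ⟩`: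
`Σ_α p(α)⟨φ|P_α (√U)† T (√U) P_α|φ⟩ = Re ⟨φ| Σ_α P_α U P_α |φ⟩`. -/
theorem stmt_17 (s : ℕ) (n : Fin s → ℕ)
    (T : ∀ j, Matrix (Fin (n j)) (Fin (n j)) ℂ)
    (hT : ∀ j, (T j)ᴴ = T j) (hT2 : ∀ j, T j * T j = 1)
    (H : Matrix (∀ j, Fin (n j)) (∀ j, Fin (n j)) ℂ) (hH : Hᴴ = H)
    (hanti : tensorProd T * H = -(H * tensorProd T))
    (φ : (∀ j, Fin (n j)) → ℂ) (ta tb : ℝ)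
    (U sqrtU : Matrix (∀ j, Fin (n j)) (∀ j, Fin (n j)) ℂ)
    (hU : U = NormedSpace.exp ((-(Complex.I * ((tb - ta : ℝ) : ℂ))) • H))
    (hsqrtU : sqrtU = NormedSpace.exp ((-(Complex.I * (((tb - ta) / 2 : ℝ) : ℂ))) • H)) :
    (∑ α : Fin s → Fin 2, ((-1 : ℂ) ^ (∑ j, (α j : ℕ))) *
        (star φ ⬝ᵥ (locProj T α * sqrtUᴴ * tensorProd T * sqrtU * locProj T α).mulVec φ)) =
      (((star φ ⬝ᵥ (∑ α : Fin s → Fin 2,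
          locProj T α * U * locProj T α).mulVec φ)).re : ℂ) := by
  set c : ℂ := -(Complex.I * (((tb - ta) / 2 : ℝ) : ℂ))
  have hA := tensorProd_mul_self hT2
  have hsqrtU_sq : sqrtU * sqrtU = U := by
    rw [hsqrtU, hU, ← Matrix.exp_add_of_commute _ _ (Commute.refl _), ← add_smul]
    congr 2
    push_cast [c]
    ring
  have hAsqrtU : tensorProd T * sqrtU = sqrtUᴴ * tensorProd T := by
    have hAcH : tensorProd T * (c • H) = -((c • H) * tensorProd T) := by
      rw [mul_smul_comm, hanti, smul_neg, smul_mul_assoc]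
    rw [hsqrtU, mul_exp_eq_exp_neg_mul hA hAcH, ← neg_smul,
      conjTranspose_exp_smul_s17 hH (by simp [c])]
  have hPA := locProj_mul_tensorProd hT2
  calc _ = ∑ α : Fin s → Fin 2, star φ ⬝ᵥ (locProj T α * U * locProj T α) *ᵥ φ := by
        refine Finset.sum_congr rfl fun α _ => ?_
        rw [mul_conjTranspose_mul_mul_mul_eq_smul (hPA α) hAsqrtU, hsqrtU_sq, smul_mulVec,
          dotProduct_smul, smul_eq_mul, ← mul_assoc, neg_one_pow_mul_self, one_mul]
    _ = star φ ⬝ᵥ (∑ α : Fin s → Fin 2, locProj T α * U * locProj T α) *ᵥ φ := by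
        rw [sum_mulVec, dotProduct_sum]
    _ = _ := by
        refine (IsHermitian.ofReal_re_star_dotProduct_mulVec_self
          (isSelfAdjoint_sum _ fun α _ => ?_) φ).symm
        rw [← hsqrtU_sq]
        exact isHermitian_mul_mul_self_mul hA hAsqrtU (isHermitian_locProj hT α) (hPA α)
          ((commute_tensorProd_locProj α).eq.trans (hPA α)) (neg_one_pow_mul_self _)
end

section
/- Kubo formula: for square matrices A, B of the same size and real t, [A, exp(-itB)] = -i·exp(-itB)·∫₀ᵗ exp(iτB) [A,B] exp(-iτB) dτ. -/
/-!
The conjugate `τ ↦ exp (τ • X) * A * exp (-(τ • X))` has derivative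
`exp (τ • X) * (X * A - A * X) * exp (-(τ • X))`, so by the fundamental theorem of calculus the
integral of the latter over `[0, t]` is `exp (t • X) * A * exp (-(t • X)) - A`. Multiplying on the
left by `exp (-(t • X))` turns this into the commutator `A * exp (-(t • X)) - exp (-(t • X)) * A`.
The Kubo formula is the case `X = i • B`, where `X * A - A * X = -i • (A * B - B * A)`.
-/

open Matrix
open NormedSpace

section BanachAlgebra

variable {𝔸 : Type*} [NormedRing 𝔸] [NormedAlgebra ℝ 𝔸] [CompleteSpace 𝔸]

theorem hasDerivAt_exp_smul_mul_mul_exp_neg_smul (X A : 𝔸) (τ : ℝ) :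
    HasDerivAt (fun s : ℝ => exp (s • X) * A * exp (-(s • X)))
      (exp (τ • X) * (X * A - A * X) * exp (-(τ • X))) τ := by
  have hexp_neg : HasDerivAt (fun s : ℝ => exp (-(s • X))) (-X * exp (-(τ • X))) τ := by
    simpa only [← neg_smul, smul_neg] using hasDerivAt_exp_smul_const' (-X) τ
  refine (((hasDerivAt_exp_smul_const X τ).mul_const A).mul hexp_neg).congr_deriv ?_
  noncomm_ring

theorem continuous_exp_smul_mul_mul_exp_neg_smul (X A : 𝔸) :
    Continuous fun s : ℝ => exp (s • X) * A * exp (-(s • X)) :=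
  continuous_iff_continuousAt.2 fun τ =>
    (hasDerivAt_exp_smul_mul_mul_exp_neg_smul X A τ).continuousAt

theorem integral_exp_smul_mul_commutator_mul_exp_neg_smul (X A : 𝔸) (t : ℝ) :
    ∫ τ in (0 : ℝ)..t, exp (τ • X) * (X * A - A * X) * exp (-(τ • X)) =
      exp (t • X) * A * exp (-(t • X)) - A := by
  rw [intervalIntegral.integral_eq_sub_of_hasDerivAt
    (fun τ _ => hasDerivAt_exp_smul_mul_mul_exp_neg_smul X A τ)
    ((continuous_exp_smul_mul_mul_exp_neg_smul X (X * A - A * X)).intervalIntegrable 0 t)]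
  simp

theorem exp_neg_mul_exp (x : 𝔸) : exp (-x) * exp x = 1 := by
  let +nondep : NormedAlgebra ℚ 𝔸 := .restrictScalars ℚ ℝ 𝔸
  rw [← exp_add_of_commute (Commute.refl x).neg_left, neg_add_cancel, exp_zero]

theorem mul_exp_neg_smul_sub_exp_neg_smul_mul (X A : 𝔸) (t : ℝ) :
    A * exp (-(t • X)) - exp (-(t • X)) * A =
      exp (-(t • X)) * ∫ τ in (0 : ℝ)..t, exp (τ • X) * (X * A - A * X) * exp (-(τ • X)) := by
  rw [integral_exp_smul_mul_commutator_mul_exp_neg_smul, mul_sub, ← mul_assoc, ← mul_assoc,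
    exp_neg_mul_exp, one_mul]

end BanachAlgebra

theorem Complex.I_mul_ofReal_smul {M : Type*} [AddCommGroup M] [Module ℂ M] (τ : ℝ) (x : M) :
    (Complex.I * τ) • x = τ • Complex.I • x := by
  rw [mul_comm, mul_smul, Complex.coe_smul]

/-- Kubo formula: for `n×n` complex matrices `A`, `B` and real `t`,
`[A, exp(-itB)] = -i·exp(-itB)·∫₀ᵗ exp(iτB) [A,B] exp(-iτB) dτ`, the integral being taken
entrywise. -/
theorem stmt_18 (n : ℕ) (A B : Matrix (Fin n) (Fin n) ℂ) (t : ℝ) :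
    A * NormedSpace.exp ((-(Complex.I * (t : ℂ))) • B) -
        NormedSpace.exp ((-(Complex.I * (t : ℂ))) • B) * A =
      (-Complex.I) •
        (NormedSpace.exp ((-(Complex.I * (t : ℂ))) • B) *
          Matrix.of (fun i j => ∫ τ in (0 : ℝ)..t,
            (NormedSpace.exp ((Complex.I * (τ : ℂ)) • B) *
              (A * B - B * A) *
              NormedSpace.exp ((-(Complex.I * (τ : ℂ))) • B)) i j)) := by
  -- Any submultiplicative norm makes the matrices a Banach algebra; the `ℓ∞` operator norm
  -- induces (definitionally) the product topology in which `exp` and the statement live.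
  let : NormedRing (Matrix (Fin n) (Fin n) ℂ) := Matrix.linftyOpNormedRing
  let : NormedAlgebra ℂ (Matrix (Fin n) (Fin n) ℂ) := Matrix.linftyOpNormedAlgebra
  let : NormedAlgebra ℝ (Matrix (Fin n) (Fin n) ℂ) := Matrix.linftyOpNormedAlgebra
  let : CompleteSpace (Matrix (Fin n) (Fin n) ℂ) := FiniteDimensional.complete ℝ _
  have hcommutator :
      (Complex.I • B) * A - A * (Complex.I • B) = (-Complex.I) • (A * B - B * A) := by
    simp only [smul_mul_assoc, mul_smul_comm, smul_sub, neg_smul, sub_neg_eq_add]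
    abel
  have hentrywise : Matrix.of (fun i j => ∫ τ in (0 : ℝ)..t,
      (exp ((Complex.I * (τ : ℂ)) • B) * (A * B - B * A) *
        exp ((-(Complex.I * (τ : ℂ))) • B)) i j) =
      ∫ τ in (0 : ℝ)..t,
        exp (τ • Complex.I • B) * (A * B - B * A) * exp (-(τ • Complex.I • B)) := by
    ext i j
    simp only [neg_smul, Complex.I_mul_ofReal_smul, Matrix.of_apply]
    exact (entryLinearMap ℝ ℂ i j).toContinuousLinearMap.intervalIntegral_comp_comm
      ((continuous_exp_smul_mul_mul_exp_neg_smul _ _).intervalIntegrable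
        (μ := MeasureTheory.volume) 0 t)
  have hkubo := mul_exp_neg_smul_sub_exp_neg_smul_mul (Complex.I • B) A t
  rw [hcommutator] at hkubo
  simp only [smul_mul_assoc, mul_smul_comm, intervalIntegral.integral_smul] at hkubo
  rw [neg_smul] at hkubo
  simp only [neg_smul, Complex.I_mul_ofReal_smul] at hentrywise ⊢
  rw [hentrywise]
  exact hkubo
end
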